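/- Let σ ≥ 0 and σ₁ ∈ ℝ. There exist constants 0 < c ≤ C, depending only on σ and σ₁, such that for every integer n ≥ 1: (a) c ≤ (Σ_{k∈ℤ²} ⟨k⟩^{2σ} |φ_n(k)|²)^{1/2} ≤ C; and (b) Σ_{k∈ℤ²} ⟨k⟩^{2σ₁} |I^{(n)}_k(t)|² ≥ c · sin²(t) · n^{2(σ₁−σ)} for every t ∈ ℝ. In particular, if σ₁ > σ and t ∉ πℤ, then (Σ_{k∈ℤ²} ⟨k⟩^{2σ₁} |I^{(n)}_k(t)|²)^{1/2} → ∞ as n → ∞, i.e. the second Picard iteration of the renormalized cubic NLS on 𝕋² exhibits no nonlinear smoothing. -/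

import Mathlib

noncomputable section

/-- Squared Euclidean norm of a lattice point `k ∈ ℤ²`. -/
def nsq (k : ℤ × ℤ) : ℝ := (k.1 : ℝ) ^ 2 + (k.2 : ℝ) ^ 2

/-- Japanese bracket `⟨k⟩ = (1 + |k|²)^{1/2}`. -/
def jap (k : ℤ × ℤ) : ℝ := Real.sqrt (1 + nsq k)

/-- The initial data `φ_n` (depending on `σ`). -/
def phi (σ : ℝ) (n : ℕ) (k : ℤ × ℤ) : ℂ :=
  if k.1 = 0 ∧ (n : ℤ) ≤ k.2 ∧ k.2 ≤ 2 * n then (((n : ℝ) ^ (-σ - 1/2) : ℝ) : ℂ)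
  else if k = (1, 0) then 1
  else if k = (2, 0) then 1
  else 0

/-- The time weight `W(t,Ω) = (1 - e^{-itΩ})/(iΩ)` for `Ω ≠ 0`, and `W(t,0) = t`. -/
def W (t Ω : ℝ) : ℂ :=
  if Ω ≠ 0 then (1 - Complex.exp (-(Complex.I * t * Ω))) / (Complex.I * Ω)
  else (t : ℂ)

/-- The resonance function `Ω = |k₁|² - |k₂|² + |k₃|² - |k|²`. -/
def Omg (k₁ k₂ k₃ k : ℤ × ℤ) : ℝ := nsq k₁ - nsq k₂ + nsq k₃ - nsq k

/-- The (gauge-renormalized, conjugated by the linear flow) first Picard iterate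
coefficient `I^{(n)}_k(t)`. -/
def picard (σ : ℝ) (n : ℕ) (k : ℤ × ℤ) (t : ℝ) : ℂ :=
  (∑' c : (ℤ × ℤ) × (ℤ × ℤ) × (ℤ × ℤ),
    if c.1 - c.2.1 + c.2.2 = k ∧ c.2.1 ≠ c.1 ∧ c.2.1 ≠ c.2.2 then
      W t (Omg c.1 c.2.1 c.2.2 k) * phi σ n c.1 * (starRingEnd ℂ) (phi σ n c.2.1)
        * phi σ n c.2.2
    else 0)
  + (t : ℂ) * (‖phi σ n k‖ ^ 2 : ℝ) * phi σ n k

lemma phi_supp {σ : ℝ} {n : ℕ} {k : ℤ × ℤ} (h : phi σ n k ≠ 0) :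
    (k.1 = 0 ∧ (n : ℤ) ≤ k.2 ∧ k.2 ≤ 2 * n) ∨ k = (1, 0) ∨ k = (2, 0) := by
  unfold phi at h
  split_ifs at h with h1 h2 h3
  · exact Or.inl h1
  · exact Or.inr (Or.inl h2)
  · exact Or.inr (Or.inr h3)
  · exact absurd rfl h

lemma phi_L (σ : ℝ) (n : ℕ) {m : ℤ} (h1 : (n:ℤ) ≤ m) (h2 : m ≤ 2*n) :
    phi σ n (0, m) = (((n:ℝ) ^ (-σ - 1/2) : ℝ) : ℂ) := if_pos ⟨rfl, h1, h2⟩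

lemma phi_one (σ : ℝ) (n : ℕ) : phi σ n (1, 0) = 1 := by
  unfold phi; norm_num

lemma phi_two (σ : ℝ) (n : ℕ) : phi σ n (2, 0) = 1 := by
  unfold phi; norm_num

lemma abs_W_two (t : ℝ) : ‖W t 2‖ ^ 2 = Real.sin t ^ 2 := by
  rw [W, if_pos (by norm_num : (2:ℝ) ≠ 0)]
  have h1 : -(Complex.I * (t:ℂ) * ((2:ℝ):ℂ)) = ((-(2*t) : ℝ) : ℂ) * Complex.I := by
    push_cast; ring
  rw [h1, Complex.exp_mul_I, ← Complex.ofReal_cos, ← Complex.ofReal_sin]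
  have h2 : (1 : ℂ) - (((Real.cos (-(2*t)) : ℝ) : ℂ) + ((Real.sin (-(2*t)) : ℝ):ℂ) * Complex.I)
      = ((1 - Real.cos (2*t) : ℝ) : ℂ) + ((Real.sin (2*t) : ℝ) : ℂ) * Complex.I := by
    rw [Real.cos_neg, Real.sin_neg]; push_cast; ring
  rw [h2, norm_div, div_pow, Complex.sq_norm, Complex.normSq_add_mul_I]
  have h3 : ‖Complex.I * ((2:ℝ):ℂ)‖ = 2 := by
    simp
  rw [h3]
  have hcos : Real.cos (2*t) = 1 - 2 * Real.sin t ^ 2 := by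
    rw [Real.cos_two_mul]; nlinarith [Real.sin_sq_add_cos_sq t]
  rw [hcos, Real.sin_two_mul]
  have hp := Real.sin_sq_add_cos_sq t
  field_simp
  nlinarith [hp]
lemma picard_eq (σ : ℝ) {n : ℕ} (hn : 1 ≤ n) {m : ℤ} (hm1 : (n:ℤ) + 1 ≤ m) (hm2 : m ≤ 2*n)
    (t : ℝ) : picard σ n (1, m) t = 2 * W t 2 * (((n:ℝ) ^ (-σ - 1/2) : ℝ) : ℂ) := by
  have hphik : phi σ n (1, m) = 0 := by
    by_contra h
    have := phi_supp h
    simp only [Prod.ext_iff, Prod.fst, Prod.snd] at this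
    omega
  have hOmg0 : Omg (0, m) (1, 0) (2, 0) (1, m) = 2 := by
    simp [Omg, nsq]; push_cast; ring
  have hOmg1 : Omg (2, 0) (1, 0) (0, m) (1, m) = 2 := by
    simp [Omg, nsq]; push_cast; ring
  set c₀ : (ℤ×ℤ)×(ℤ×ℤ)×(ℤ×ℤ) := ((0, m), (1, 0), (2, 0)) with hc₀
  set c₁ : (ℤ×ℤ)×(ℤ×ℤ)×(ℤ×ℤ) := ((2, 0), (1, 0), (0, m)) with hc₁
  have hne01 : c₀ ≠ c₁ := by
    simp only [hc₀, hc₁, ne_eq, Prod.ext_iff]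
    omega
  rw [picard, hphik]
  rw [tsum_eq_sum (s := {c₀, c₁}) ?_]
  · rw [Finset.sum_insert (by simp [hne01]), Finset.sum_singleton]
    have e0 : (if c₀.1 - c₀.2.1 + c₀.2.2 = ((1:ℤ), m) ∧ c₀.2.1 ≠ c₀.1 ∧ c₀.2.1 ≠ c₀.2.2 then
        W t (Omg c₀.1 c₀.2.1 c₀.2.2 (1, m)) * phi σ n c₀.1 * (starRingEnd ℂ) (phi σ n c₀.2.1)
          * phi σ n c₀.2.2 else 0)
        = W t 2 * (((n:ℝ) ^ (-σ - 1/2) : ℝ) : ℂ) := by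
      rw [if_pos]
      · show W t (Omg (0, m) (1, 0) (2, 0) (1, m)) * phi σ n (0, m) *
            (starRingEnd ℂ) (phi σ n (1, 0)) * phi σ n (2, 0) = _
        rw [hOmg0, phi_L σ n (by omega) hm2, phi_one, phi_two, map_one]
        ring
      · refine ⟨?_, ?_, ?_⟩ <;> simp only [hc₀, Prod.mk_sub_mk, Prod.mk_add_mk, Prod.ext_iff, ne_eq] <;> omega
    have e1 : (if c₁.1 - c₁.2.1 + c₁.2.2 = ((1:ℤ), m) ∧ c₁.2.1 ≠ c₁.1 ∧ c₁.2.1 ≠ c₁.2.2 then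
        W t (Omg c₁.1 c₁.2.1 c₁.2.2 (1, m)) * phi σ n c₁.1 * (starRingEnd ℂ) (phi σ n c₁.2.1)
          * phi σ n c₁.2.2 else 0)
        = W t 2 * (((n:ℝ) ^ (-σ - 1/2) : ℝ) : ℂ) := by
      rw [if_pos]
      · show W t (Omg (2, 0) (1, 0) (0, m) (1, m)) * phi σ n (2, 0) *
            (starRingEnd ℂ) (phi σ n (1, 0)) * phi σ n (0, m) = _
        rw [hOmg1, phi_L σ n (by omega) hm2, phi_one, phi_two, map_one]
        ring
      · refine ⟨?_, ?_, ?_⟩ <;> simp only [hc₁, Prod.mk_sub_mk, Prod.mk_add_mk, Prod.ext_iff, ne_eq] <;> omega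
    rw [e0, e1]
    simp
    ring
  · intro c hc
    obtain ⟨⟨a, b⟩, ⟨p, q⟩, ⟨u, v⟩⟩ := c
    split_ifs with hcond
    · by_contra hprod
      have h1 : phi σ n (a, b) ≠ 0 := by intro h; apply hprod; simp [h]
      have h2 : phi σ n (p, q) ≠ 0 := by intro h; apply hprod; simp [h]
      have h3 : phi σ n (u, v) ≠ 0 := by intro h; apply hprod; simp [h]
      obtain ⟨hcsum, hne1, hne2⟩ := hcond
      have hEq : a - p + u = 1 ∧ b - q + v = m := by
        simpa [Prod.ext_iff] using hcsum
      have hne1' : ¬(p = a ∧ q = b) := by simpa [Prod.ext_iff] using hne1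
      have hne2' : ¬(p = u ∧ q = v) := by simpa [Prod.ext_iff] using hne2
      have hs1 := phi_supp h1
      have hs2 := phi_supp h2
      have hs3 := phi_supp h3
      simp only [Prod.ext_iff, Prod.fst, Prod.snd] at hs1 hs2 hs3
      simp only [hc₀, hc₁, Finset.mem_insert, Finset.mem_singleton, Prod.ext_iff, not_or] at hc
      omega
    · rfl

lemma abs_picard (σ : ℝ) {n : ℕ} (hn : 1 ≤ n) {m : ℤ} (hm1 : (n:ℤ) + 1 ≤ m) (hm2 : m ≤ 2*n)
    (t : ℝ) : ‖picard σ n (1, m) t‖ ^ 2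
      = 4 * Real.sin t ^ 2 * (n:ℝ) ^ (-(2*σ) - 1) := by
  rw [picard_eq σ hn hm1 hm2 t]
  rw [norm_mul, norm_mul, Complex.norm_real, Real.norm_eq_abs, Complex.norm_two]
  rw [abs_of_nonneg (Real.rpow_nonneg (Nat.cast_nonneg n) _)]
  rw [mul_pow, mul_pow, abs_W_two]
  have h2 : ((n:ℝ) ^ (-σ - 1/2)) ^ 2 = (n:ℝ) ^ (-(2*σ) - 1) := by
    rw [← Real.rpow_natCast ((n:ℝ) ^ (-σ - 1/2)) 2, ← Real.rpow_mul (Nat.cast_nonneg n)]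
    congr 1; push_cast; ring
  rw [h2]; ring

lemma picard_supp (σ : ℝ) (n : ℕ) (t : ℝ) {x y : ℤ}
    (hk : ¬(-2 ≤ x ∧ x ≤ 4 ∧ -(2*(n:ℤ)) ≤ y ∧ y ≤ 4*n)) :
    picard σ n (x, y) t = 0 := by
  have hphik : phi σ n (x, y) = 0 := by
    by_contra h
    have := phi_supp h
    simp only [Prod.ext_iff, Prod.fst, Prod.snd] at this
    omega
  have hz : ∀ c : (ℤ×ℤ)×(ℤ×ℤ)×(ℤ×ℤ),
      (if c.1 - c.2.1 + c.2.2 = (x, y) ∧ c.2.1 ≠ c.1 ∧ c.2.1 ≠ c.2.2 then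
        W t (Omg c.1 c.2.1 c.2.2 (x, y)) * phi σ n c.1 * (starRingEnd ℂ) (phi σ n c.2.1)
          * phi σ n c.2.2 else 0) = 0 := by
    intro c
    obtain ⟨⟨a, b⟩, ⟨p, q⟩, ⟨u, v⟩⟩ := c
    split_ifs with hcond
    · by_contra hprod
      have h1 : phi σ n (a, b) ≠ 0 := by intro h; apply hprod; simp [h]
      have h2 : phi σ n (p, q) ≠ 0 := by intro h; apply hprod; simp [h]
      have h3 : phi σ n (u, v) ≠ 0 := by intro h; apply hprod; simp [h]
      obtain ⟨hcsum, -, -⟩ := hcond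
      have hEq : a - p + u = x ∧ b - q + v = y := by
        simpa [Prod.ext_iff] using hcsum
      have hs1 := phi_supp h1
      have hs2 := phi_supp h2
      have hs3 := phi_supp h3
      simp only [Prod.ext_iff, Prod.fst, Prod.snd] at hs1 hs2 hs3
      omega
    · rfl
  rw [picard, hphik, tsum_congr hz, tsum_zero]
  simp

lemma summable_picard (σ σ₁ : ℝ) (n : ℕ) (t : ℝ) :
    Summable (fun k : ℤ × ℤ => jap k ^ (2*σ₁) * ‖picard σ n k t‖ ^ 2) := by
  apply summable_of_ne_finset_zero
    (s := Finset.Icc ((-2 : ℤ), (-(2*(n:ℤ)))) ((4:ℤ), (4*(n:ℤ))))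
  intro k hk
  obtain ⟨x, y⟩ := k
  rw [picard_supp σ n t (fun hc => hk (by
    simp only [Finset.mem_Icc, Prod.mk_le_mk]
    omega))]
  simp

lemma phi_zero_outside (σ : ℝ) (n : ℕ) {k : ℤ × ℤ}
    (hk : k ∉ Finset.Icc (((0:ℤ), (0:ℤ))) (((2:ℤ), (2*(n:ℤ))))) : phi σ n k = 0 := by
  by_contra h
  apply hk
  have := phi_supp h
  simp only [Prod.ext_iff, Prod.fst, Prod.snd] at this
  simp only [Finset.mem_Icc, Prod.le_def]
  omega

lemma summable_phi (σ σ' : ℝ) (n : ℕ) :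
    Summable (fun k : ℤ × ℤ => jap k ^ (2*σ') * ‖phi σ n k‖ ^ 2) := by
  apply summable_of_ne_finset_zero
    (s := Finset.Icc (((0:ℤ), (0:ℤ))) (((2:ℤ), (2*(n:ℤ)))))
  intro k hk
  rw [phi_zero_outside σ n hk]
  simp

lemma sq_rpow (n : ℕ) (a : ℝ) : ((n:ℝ) ^ a) ^ 2 = (n:ℝ) ^ (2*a) := by
  rw [← Real.rpow_natCast ((n:ℝ) ^ a) 2, ← Real.rpow_mul (Nat.cast_nonneg n)]
  congr 1; push_cast; ring

lemma nine_rpow (s : ℝ) {x : ℝ} (hx : 0 ≤ x) : (3*x) ^ (2*s) = (9:ℝ)^s * x^(2*s) := by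
  rw [Real.mul_rpow (by norm_num) hx]
  congr 1
  rw [show (2*s) = (2:ℝ)*s from rfl, Real.rpow_mul (by norm_num : (0:ℝ) ≤ 3)]
  norm_num

lemma jap_one_le {n : ℕ} (hn : 1 ≤ n) {m : ℤ} (hm1 : (n:ℤ) + 1 ≤ m) (hm2 : m ≤ 2*n) :
    (n:ℝ) ≤ jap (1, m) ∧ jap (1, m) ≤ 3 * n := by
  have h1 : ((n:ℝ)) + 1 ≤ (m:ℝ) := by exact_mod_cast hm1
  have h2 : (m:ℝ) ≤ 2*n := by exact_mod_cast hm2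
  have hn' : (1:ℝ) ≤ (n:ℝ) := by exact_mod_cast hn
  have hj : jap (1, m) = Real.sqrt (1 + (1 + (m:ℝ)^2)) := by
    simp [jap, nsq]
  constructor
  · rw [hj]
    rw [show (n:ℝ) = Real.sqrt ((n:ℝ)^2) by rw [Real.sqrt_sq (by linarith)]]
    apply Real.sqrt_le_sqrt
    nlinarith
  · rw [hj]
    rw [show (3:ℝ) * n = Real.sqrt ((3*(n:ℝ))^2) by rw [Real.sqrt_sq (by linarith)]]
    apply Real.sqrt_le_sqrt
    nlinarith

lemma jap_rpow_lower (σ₁ : ℝ) {n : ℕ} (hn : 1 ≤ n) {m : ℤ} (hm1 : (n:ℤ) + 1 ≤ m)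
    (hm2 : m ≤ 2*n) : (9:ℝ)^(-|σ₁|) * (n:ℝ)^(2*σ₁) ≤ jap (1, m) ^ (2*σ₁) := by
  have hn' : (1:ℝ) ≤ (n:ℝ) := by exact_mod_cast hn
  obtain ⟨hl, hu⟩ := jap_one_le hn hm1 hm2
  have hjpos : (0:ℝ) < jap (1, m) := by linarith
  rcases le_or_gt 0 σ₁ with h | h
  · have e1 : (9:ℝ)^(-|σ₁|) ≤ 1 :=
      Real.rpow_le_one_of_one_le_of_nonpos (by norm_num) (by simp [abs_nonneg, neg_nonpos])
    have e2 : (n:ℝ)^(2*σ₁) ≤ jap (1, m) ^ (2*σ₁) :=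
      Real.rpow_le_rpow (by linarith) hl (by linarith)
    have e3 : (0:ℝ) ≤ (n:ℝ)^(2*σ₁) := Real.rpow_nonneg (by linarith) _
    nlinarith
  · have habs : |σ₁| = -σ₁ := abs_of_neg h
    rw [habs, neg_neg, ← nine_rpow σ₁ (by linarith : (0:ℝ) ≤ (n:ℝ))]
    exact Real.rpow_le_rpow_of_nonpos hjpos hu (by linarith)

lemma abs_phi_L_sq (σ : ℝ) (n : ℕ) {m : ℤ} (h1 : (n:ℤ) ≤ m) (h2 : m ≤ 2*n) :
    ‖phi σ n (0, m)‖ ^ 2 = (n:ℝ) ^ (-(2*σ) - 1) := by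
  rw [phi_L σ n h1 h2, Complex.norm_real, Real.norm_eq_abs,
    abs_of_nonneg (Real.rpow_nonneg (Nat.cast_nonneg n) _), sq_rpow]
  congr 1; ring

lemma jap_nonneg (k : ℤ × ℤ) : 0 ≤ jap k := Real.sqrt_nonneg _

lemma jap_rpow_le (σ : ℝ) (hσ : 0 ≤ σ) {x : ℝ} (hx : 0 ≤ x) {k : ℤ × ℤ}
    (h : jap k ≤ 3*x) : jap k ^ (2*σ) ≤ (9:ℝ)^σ * x^(2*σ) := by
  rw [← nine_rpow σ hx]
  exact Real.rpow_le_rpow (jap_nonneg k) h (by linarith)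

lemma phi_sum_upper (σ : ℝ) (hσ : 0 ≤ σ) {n : ℕ} (hn : 1 ≤ n) :
    (∑' k : ℤ × ℤ, jap k ^ (2 * σ) * ‖phi σ n k‖ ^ 2) ≤ 4 * (9:ℝ)^σ := by
  have hn' : (1:ℝ) ≤ (n:ℝ) := by exact_mod_cast hn
  have hnpos : (0:ℝ) < (n:ℝ) := by linarith
  have h9 : (0:ℝ) < (9:ℝ)^σ := Real.rpow_pos_of_pos (by norm_num) σ
  set S₁ : Finset (ℤ×ℤ) := (Finset.Icc (n:ℤ) (2*n)).image (fun m => ((0:ℤ), m)) with hS₁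
  set S₂ : Finset (ℤ×ℤ) := {((1:ℤ),(0:ℤ)), ((2:ℤ),(0:ℤ))} with hS₂
  have hdisj : Disjoint S₁ S₂ := by
    rw [Finset.disjoint_left]
    intro a ha hb
    simp only [hS₁, Finset.mem_image, Finset.mem_Icc] at ha
    simp only [hS₂, Finset.mem_insert, Finset.mem_singleton] at hb
    obtain ⟨m, _, rfl⟩ := ha
    rcases hb with h | h <;> simp [Prod.ext_iff] at h
  have hz : ∀ k ∉ S₁ ∪ S₂, jap k ^ (2*σ) * ‖phi σ n k‖ ^ 2 = 0 := by
    intro k hk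
    have hzero : phi σ n k = 0 := by
      by_contra h
      apply hk
      rcases phi_supp h with ⟨h1, h2, h3⟩ | h' | h'
      · apply Finset.mem_union_left
        rw [hS₁]
        simp only [Finset.mem_image, Finset.mem_Icc]
        exact ⟨k.2, ⟨h2, h3⟩, by rw [Prod.ext_iff]; exact ⟨h1.symm, rfl⟩⟩
      · subst h'; apply Finset.mem_union_right; simp [hS₂]
      · subst h'; apply Finset.mem_union_right; simp [hS₂]
    rw [hzero]; simp
  rw [tsum_eq_sum (s := S₁ ∪ S₂) hz, Finset.sum_union hdisj]
  have hb1 : ∑ k ∈ S₁, jap k ^ (2*σ) * ‖phi σ n k‖ ^ 2 ≤ 2 * (9:ℝ)^σ := by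
    rw [hS₁, Finset.sum_image (by intro x _ y _ h; simpa [Prod.ext_iff] using h)]
    have hcard : (Finset.Icc (n:ℤ) (2*n)).card = n + 1 := by
      rw [Int.card_Icc]; omega
    have hterm : ∀ m ∈ Finset.Icc (n:ℤ) (2*n),
        jap ((0:ℤ), m) ^ (2*σ) * ‖phi σ n (0, m)‖ ^ 2 ≤ (9:ℝ)^σ * (n:ℝ)⁻¹ := by
      intro m hm
      rw [Finset.mem_Icc] at hm
      have hm1 : ((n:ℝ)) ≤ (m:ℝ) := by exact_mod_cast hm.1
      have hm2 : (m:ℝ) ≤ 2*n := by exact_mod_cast hm.2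
      have hjap : jap ((0:ℤ), m) ≤ 3 * n := by
        have : jap ((0:ℤ), m) = Real.sqrt (1 + (0 + (m:ℝ)^2)) := by simp [jap, nsq]
        rw [this, show (3:ℝ) * n = Real.sqrt ((3*(n:ℝ))^2) by rw [Real.sqrt_sq (by linarith)]]
        apply Real.sqrt_le_sqrt
        nlinarith
      rw [abs_phi_L_sq σ n hm.1 hm.2]
      calc jap ((0:ℤ), m) ^ (2*σ) * (n:ℝ) ^ (-(2*σ) - 1)
          ≤ ((9:ℝ)^σ * (n:ℝ)^(2*σ)) * (n:ℝ) ^ (-(2*σ) - 1) := by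
            apply mul_le_mul_of_nonneg_right (jap_rpow_le σ hσ hnpos.le hjap)
              (Real.rpow_nonneg hnpos.le _)
        _ = (9:ℝ)^σ * (n:ℝ)⁻¹ := by
            rw [mul_assoc, ← Real.rpow_add hnpos]
            congr 1
            rw [show 2*σ + (-(2*σ) - 1) = -1 by ring, Real.rpow_neg_one]
      done
    calc ∑ m ∈ Finset.Icc (n:ℤ) (2*n), jap ((0:ℤ), m) ^ (2*σ) * ‖phi σ n (0,m)‖ ^ 2
        ≤ ∑ _m ∈ Finset.Icc (n:ℤ) (2*n), (9:ℝ)^σ * (n:ℝ)⁻¹ := Finset.sum_le_sum hterm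
      _ = ((n:ℝ)+1) * ((9:ℝ)^σ * (n:ℝ)⁻¹) := by
          rw [Finset.sum_const, hcard]; push_cast; ring
      _ ≤ 2 * (9:ℝ)^σ := by
          rw [show ((n:ℝ)+1) * ((9:ℝ)^σ * (n:ℝ)⁻¹) = (9:ℝ)^σ * (((n:ℝ)+1) * (n:ℝ)⁻¹) by ring]
          have h2 : ((n:ℝ)+1) * (n:ℝ)⁻¹ ≤ 2 := by
            rw [mul_inv_le_iff₀ hnpos]
            linarith
          nlinarith
  have hb2 : ∑ k ∈ S₂, jap k ^ (2*σ) * ‖phi σ n k‖ ^ 2 ≤ 2 * (9:ℝ)^σ := by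
    rw [hS₂, Finset.sum_pair (by simp [Prod.ext_iff])]
    have hj1 : jap ((1:ℤ),(0:ℤ)) ≤ 3 * 1 := by
      rw [show jap ((1:ℤ),(0:ℤ)) = Real.sqrt (1 + (1 + 0)) by simp [jap, nsq],
        show (3:ℝ) * 1 = Real.sqrt ((3:ℝ)^2) by rw [Real.sqrt_sq] <;> norm_num]
      apply Real.sqrt_le_sqrt; norm_num
    have hj2 : jap ((2:ℤ),(0:ℤ)) ≤ 3 * 1 := by
      rw [show jap ((2:ℤ),(0:ℤ)) = Real.sqrt (1 + (4 + 0)) by norm_num [jap, nsq],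
        show (3:ℝ) * 1 = Real.sqrt ((3:ℝ)^2) by rw [Real.sqrt_sq] <;> norm_num]
      apply Real.sqrt_le_sqrt; norm_num
    have e1 := jap_rpow_le σ hσ (by norm_num : (0:ℝ) ≤ 1) hj1
    have e2 := jap_rpow_le σ hσ (by norm_num : (0:ℝ) ≤ 1) hj2
    rw [Real.one_rpow, mul_one] at e1 e2
    rw [phi_one, phi_two]
    simp only [norm_one, one_pow, mul_one]
    linarith
  linarith

lemma phi_sum_lower (σ : ℝ) (hσ : 0 ≤ σ) {n : ℕ} (hn : 1 ≤ n) :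
    1 ≤ ∑' k : ℤ × ℤ, jap k ^ (2 * σ) * ‖phi σ n k‖ ^ 2 := by
  have hj : (1:ℝ) ≤ jap ((1:ℤ),(0:ℤ)) := by
    rw [show jap ((1:ℤ),(0:ℤ)) = Real.sqrt (1 + (1 + 0)) by simp [jap, nsq],
      show (1:ℝ) = Real.sqrt 1 by simp]
    apply Real.sqrt_le_sqrt; norm_num
  have h1 : (1:ℝ) ≤ jap ((1:ℤ),(0:ℤ)) ^ (2*σ) * ‖phi σ n ((1:ℤ),(0:ℤ))‖ ^ 2 := by
    rw [phi_one]
    simp only [norm_one, one_pow, mul_one]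
    calc (1:ℝ) = 1 ^ (2*σ) := (Real.one_rpow _).symm
      _ ≤ jap ((1:ℤ),(0:ℤ)) ^ (2*σ) := Real.rpow_le_rpow zero_le_one hj (by linarith)
  refine h1.trans (Summable.le_tsum (summable_phi σ σ n) ((1:ℤ),(0:ℤ)) fun j _ => ?_)
  exact mul_nonneg (Real.rpow_nonneg (jap_nonneg j) _) (by positivity)

lemma picard_sum_lower (σ σ₁ : ℝ) {n : ℕ} (hn : 1 ≤ n) (t : ℝ) :
    min 1 (4 * (9:ℝ)^(-|σ₁|)) * Real.sin t ^ 2 * (n:ℝ) ^ (2*(σ₁ - σ)) ≤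
      ∑' k : ℤ × ℤ, jap k ^ (2*σ₁) * ‖picard σ n k t‖ ^ 2 := by
  have hn' : (1:ℝ) ≤ (n:ℝ) := by exact_mod_cast hn
  have hnpos : (0:ℝ) < (n:ℝ) := by linarith
  set T : Finset (ℤ×ℤ) := (Finset.Icc ((n:ℤ)+1) (2*n)).image (fun m => ((1:ℤ), m)) with hT
  have hsum : ∑ k ∈ T, jap k ^ (2*σ₁) * ‖picard σ n k t‖ ^ 2 ≤
      ∑' k : ℤ × ℤ, jap k ^ (2*σ₁) * ‖picard σ n k t‖ ^ 2 :=
    Summable.sum_le_tsum T (fun k _ => mul_nonneg (Real.rpow_nonneg (jap_nonneg k) _) (by positivity))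
      (summable_picard σ σ₁ n t)
  refine le_trans ?_ hsum
  rw [hT, Finset.sum_image (fun x _ y _ h => by simpa [Prod.ext_iff] using h)]
  have hcard : (Finset.Icc ((n:ℤ)+1) (2*n)).card = n := by rw [Int.card_Icc]; omega
  have hterm : ∀ m ∈ Finset.Icc ((n:ℤ)+1) (2*n),
      (9:ℝ)^(-|σ₁|) * (n:ℝ)^(2*σ₁) * (4 * Real.sin t ^ 2 * (n:ℝ) ^ (-(2*σ) - 1))
        ≤ jap ((1:ℤ), m) ^ (2*σ₁) * ‖picard σ n ((1:ℤ), m) t‖ ^ 2 := by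
    intro m hm
    rw [Finset.mem_Icc] at hm
    rw [abs_picard σ hn hm.1 hm.2 t]
    apply mul_le_mul_of_nonneg_right (jap_rpow_lower σ₁ hn hm.1 hm.2)
    positivity
  have hle := Finset.card_nsmul_le_sum (Finset.Icc ((n:ℤ)+1) (2*n)) _ _ hterm
  rw [hcard, nsmul_eq_mul] at hle
  refine le_trans ?_ hle
  have hpow : ((n:ℝ)^(2*σ₁) * (n:ℝ) ^ (-(2*σ) - 1)) * (n:ℝ) = (n:ℝ)^(2*(σ₁ - σ)) := by
    rw [← Real.rpow_add hnpos, ← Real.rpow_add_one (ne_of_gt hnpos)]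
    congr 1; ring
  rw [show ((n:ℕ):ℝ) * ((9:ℝ)^(-|σ₁|) * (n:ℝ)^(2*σ₁) * (4 * Real.sin t ^ 2 * (n:ℝ) ^ (-(2*σ) - 1)))
      = (4 * (9:ℝ)^(-|σ₁|)) * Real.sin t ^ 2 * (((n:ℝ)^(2*σ₁) * (n:ℝ) ^ (-(2*σ) - 1)) * (n:ℝ)) by push_cast; ring]
  rw [hpow]
  apply mul_le_mul_of_nonneg_right _ (Real.rpow_nonneg hnpos.le _)
  apply mul_le_mul_of_nonneg_right (min_le_right _ _) (by positivity)

/-- There exist constants `0 < c ≤ C`, depending only on `σ ≥ 0` and `σ₁`, such that for every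
`n ≥ 1`: (a) `c ≤ ‖φ_n‖_{H^σ} ≤ C`, and (b) `Σ_k ⟨k⟩^{2σ₁} |I^{(n)}_k(t)|² ≥ c sin²t · n^{2(σ₁-σ)}`
for all `t`.  In particular, if `σ₁ > σ` and `t ∉ πℤ`, then `‖I^{(n)}(t)‖_{H^{σ₁}} → ∞`:
no nonlinear smoothing for the second Picard iteration of the renormalized cubic NLS on `𝕋²`. -/
theorem statement1 (σ σ₁ : ℝ) (hσ : 0 ≤ σ) :
    (∃ c C : ℝ, 0 < c ∧ c ≤ C ∧
      ∀ n : ℕ, 1 ≤ n →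
        (c ≤ Real.sqrt (∑' k : ℤ × ℤ, jap k ^ (2 * σ) * ‖phi σ n k‖ ^ 2) ∧
          Real.sqrt (∑' k : ℤ × ℤ, jap k ^ (2 * σ) * ‖phi σ n k‖ ^ 2) ≤ C) ∧
        (∀ t : ℝ,
          c * Real.sin t ^ 2 * (n : ℝ) ^ (2 * (σ₁ - σ)) ≤
            ∑' k : ℤ × ℤ, jap k ^ (2 * σ₁) * ‖picard σ n k t‖ ^ 2))
    ∧ (σ < σ₁ → ∀ t : ℝ, (∀ j : ℤ, t ≠ Real.pi * j) →
        Filter.Tendsto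
          (fun n : ℕ =>
            Real.sqrt (∑' k : ℤ × ℤ, jap k ^ (2 * σ₁) * ‖picard σ n k t‖ ^ 2))
          Filter.atTop Filter.atTop) := by
  have hcpos : 0 < min 1 (4 * (9:ℝ)^(-|σ₁|)) := lt_min one_pos (by positivity)
  constructor
  · refine ⟨min 1 (4 * (9:ℝ)^(-|σ₁|)), max 1 (Real.sqrt (4 * (9:ℝ)^σ)), hcpos,
      le_trans (min_le_left _ _) (le_max_left _ _), fun n hn => ⟨⟨?_, ?_⟩, fun t => ?_⟩⟩
    · refine le_trans (min_le_left _ _) ?_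
      rw [show (1:ℝ) = Real.sqrt 1 by simp]
      exact Real.sqrt_le_sqrt (phi_sum_lower σ hσ hn)
    · exact le_trans (Real.sqrt_le_sqrt (phi_sum_upper σ hσ hn)) (le_max_right _ _)
    · exact picard_sum_lower σ σ₁ hn t
  · intro hσ₁ t ht
    have hsin : Real.sin t ≠ 0 := by
      intro h0
      obtain ⟨j, hj⟩ := Real.sin_eq_zero_iff.1 h0
      exact ht j (by rw [← hj]; ring)
    set c := min 1 (4 * (9:ℝ)^(-|σ₁|)) with hc
    have hK : 0 < Real.sqrt (c * Real.sin t ^ 2) := Real.sqrt_pos.2 (by positivity)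
    have htend : Filter.Tendsto (fun n : ℕ => Real.sqrt (c * Real.sin t ^ 2) * (n:ℝ)^(σ₁ - σ))
        Filter.atTop Filter.atTop :=
      Filter.Tendsto.const_mul_atTop hK
        ((tendsto_rpow_atTop (by linarith)).comp tendsto_natCast_atTop_atTop)
    apply Filter.tendsto_atTop_mono' _ ?_ htend
    refine Filter.eventually_atTop.2 ⟨1, fun n hn => ?_⟩
    have hb := picard_sum_lower σ σ₁ hn t
    rw [← hc] at hb
    refine le_trans (le_of_eq ?_) (Real.sqrt_le_sqrt hb)
    rw [Real.sqrt_mul (by positivity) ((n:ℝ)^(2*(σ₁-σ)))]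
    congr 1
    rw [show 2*(σ₁-σ) = (σ₁-σ)*2 by ring, Real.rpow_mul (Nat.cast_nonneg n),
      Real.rpow_two, Real.sqrt_sq (Real.rpow_nonneg (Nat.cast_nonneg n) _)]

end
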